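/- arXiv:1507.08208 — 4 statements merged into one kernel-verified Lean document; each statement's English description precedes it below -/
import Mathlib

section
/- Every graph G admits an improper edge-coloring with k colors that is nearly equitable, i.e., for every vertex v and every pair of colors i ≠ j, the number of i-colored edges incident to v and the number of j-colored edges incident to v differ by at most 2. -/
namespace NearlyEqAux

open Finset

variable {V : Type} [Fintype V] [DecidableEq V] {k : ℕ}
variable (G : SimpleGraph V) [DecidableRel G.Adj]

/-- Number of `a`-colored edges incident to `x`. -/
def D (c : Sym2 V → Fin k) (x : V) (a : Fin k) : ℕ :=
  ((G.incidenceFinset x).filter (fun e => c e = a)).card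

/-- Number of edges of the list `es` containing `x` and colored `a`. -/
def cnt (c : Sym2 V → Fin k) (es : List (Sym2 V)) (x : V) (a : Fin k) : ℕ :=
  es.countP (fun e => decide (x ∈ e ∧ c e = a))

/-- Alternating trails: `Alt c i j n v es w` means there is a trail of `n`
distinct edges of `G` from `v` to `w`, with edge list `es` (most recent first),
whose `t`-th edge (1-indexed from the start) has color `i` if `t` is odd, `j` otherwise. -/
inductive Alt (c : Sym2 V → Fin k) (i j : Fin k) : ℕ → V → List (Sym2 V) → V → Prop
  | nil (v : V) : Alt c i j 0 v [] v
  | cons {n v es w} (u : V) (h : Alt c i j n v es w)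
      (hadj : s(w, u) ∈ G.edgeSet) (hmem : s(w, u) ∉ es)
      (hcol : c s(w, u) = if (n + 1) % 2 = 1 then i else j) :
      Alt c i j (n + 1) v (s(w, u) :: es) u

variable {G}
variable {c : Sym2 V → Fin k} {i j : Fin k} {n : ℕ} {v w : V} {es : List (Sym2 V)}

lemma Alt.nodup (h : Alt G c i j n v es w) : es.Nodup := by
  induction h with
  | nil => exact List.nodup_nil
  | cons u h hadj hmem hcol ih => exact List.nodup_cons.mpr ⟨hmem, ih⟩

lemma Alt.sub (h : Alt G c i j n v es w) : ∀ e ∈ es, e ∈ G.edgeSet := by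
  induction h with
  | nil => simp
  | cons u h hadj hmem hcol ih =>
    intro e he
    rcases List.mem_cons.mp he with h1 | h1
    · exact h1 ▸ hadj
    · exact ih e h1

lemma Alt.len (h : Alt G c i j n v es w) : es.length = n := by
  induction h with
  | nil => rfl
  | cons u h hadj hmem hcol ih => simp [ih]

lemma cnt_cons (e : Sym2 V) (x : V) (a : Fin k) :
    cnt c (e :: es) x a = cnt c es x a + if (x ∈ e ∧ c e = a) then 1 else 0 := by
  simp [cnt, List.countP_cons]

lemma Alt.cnt_diff (hij : i ≠ j) (h : Alt G c i j n v es w) (x : V) :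
    (cnt c es x i : ℤ) - cnt c es x j =
      (if x = v then 1 else 0) + (if n % 2 = 1 then 1 else -1) * (if x = w then 1 else 0) := by
  induction h with
  | nil v => by_cases hxv : x = v <;> simp [cnt, hxv]
  | @cons n v es w u h hadj hmem hcol ih =>
    have hwu : w ≠ u := fun hh => (G.not_isDiag_of_mem_edgeSet hadj) (by simp [hh])
    have hxe : x ∈ s(w,u) ↔ (x = w ∨ x = u) := Sym2.mem_iff
    rw [cnt_cons, cnt_cons]
    rcases Nat.even_or_odd n with hn | hn
    · have h1 : n % 2 = 0 := Nat.even_iff.mp hn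
      have h2 : (n+1) % 2 = 1 := by omega
      rw [h2, if_pos rfl] at hcol
      have e1 : (x ∈ s(w,u) ∧ c s(w,u) = i) ↔ (x = w ∨ x = u) := by simp [hxe, hcol]
      have e2 : (x ∈ s(w,u) ∧ c s(w,u) = j) ↔ False := by simp [hcol, hij]
      simp only [e1, e2, if_false]
      rw [h1] at ih
      rw [h2]
      push_cast
      split_ifs at ih ⊢ <;> first | omega | simp_all
    · have h1 : n % 2 = 1 := Nat.odd_iff.mp hn
      have h2 : (n+1) % 2 = 0 := by omega
      rw [h2, if_neg (by omega)] at hcol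
      have e1 : (x ∈ s(w,u) ∧ c s(w,u) = i) ↔ False := by simp [hcol, hij.symm]
      have e2 : (x ∈ s(w,u) ∧ c s(w,u) = j) ↔ (x = w ∨ x = u) := by simp [hxe, hcol]
      simp only [e1, e2, if_false]
      rw [h1] at ih
      rw [h2]
      push_cast
      split_ifs at ih ⊢ <;> first | omega | simp_all


lemma cnt_eq_card (hnd : es.Nodup) (hsub : ∀ e ∈ es, e ∈ G.edgeSet) (x : V) (a : Fin k) :
    cnt c es x a = (((G.incidenceFinset x).filter (fun e => e ∈ es ∧ c e = a))).card := by
  have h1 : filter (fun e => e ∈ es ∧ c e = a) (G.incidenceFinset x)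
      = filter (fun e => x ∈ e ∧ c e = a) es.toFinset := by
    ext e
    simp only [mem_filter, SimpleGraph.mem_incidenceFinset, List.mem_toFinset,
      SimpleGraph.incidenceSet, Set.mem_setOf_eq, Set.mem_sep_iff]
    constructor
    · rintro ⟨⟨he, hx⟩, hes, hc⟩; exact ⟨hes, hx, hc⟩
    · rintro ⟨hes, hx, hc⟩; exact ⟨⟨hsub e hes, hx⟩, hes, hc⟩
  have h2 : filter (fun e => x ∈ e ∧ c e = a) es.toFinset
      = (es.filter (fun e => decide (x ∈ e ∧ c e = a))).toFinset := by
    rw [List.toFinset_filter]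
    apply Finset.filter_congr
    intro e _
    simp
  rw [h1, h2, List.card_toFinset, List.Nodup.dedup (hnd.filter _)]
  simp [cnt, List.countP_eq_length_filter]

/-- the swapped coloring -/
def swapOn (c : Sym2 V → Fin k) (i j : Fin k) (es : List (Sym2 V)) : Sym2 V → Fin k :=
  fun e => if e ∈ es then (if c e = i then j else if c e = j then i else c e) else c e

lemma D_split (x : V) (a : Fin k) (c : Sym2 V → Fin k) (es : List (Sym2 V)) :
    D G c x a = ((G.incidenceFinset x).filter (fun e => e ∈ es ∧ c e = a)).card
      + ((G.incidenceFinset x).filter (fun e => e ∉ es ∧ c e = a)).card := by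
  rw [D, ← Finset.card_filter_add_card_filter_not (p := fun e => e ∈ es),
    Finset.filter_filter, Finset.filter_filter]
  congr 1 <;> (apply congrArg; apply Finset.filter_congr; intro e _; constructor <;> (intro h; exact ⟨h.2, h.1⟩))

lemma D_swap_other (hij : i ≠ j) (x : V) (a : Fin k) (hai : a ≠ i) (haj : a ≠ j) :
    D G (swapOn c i j es) x a = D G c x a := by
  unfold D
  apply congrArg
  apply Finset.filter_congr
  intro e _
  unfold swapOn
  by_cases he : e ∈ es <;> by_cases h1 : c e = i <;> by_cases h2 : c e = j <;>
    simp [he, h1, h2, hai.symm, haj.symm, hij, hij.symm]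

lemma swapOn_mem (hij : i ≠ j) {e : Sym2 V} (he : e ∈ es) :
    (swapOn c i j es e = i ↔ c e = j) ∧ (swapOn c i j es e = j ↔ c e = i) := by
  unfold swapOn
  rw [if_pos he]
  by_cases h1 : c e = i <;> by_cases h2 : c e = j <;>
    simp_all [hij, hij.symm] <;>
    constructor <;> intro h <;> simp_all <;> exact absurd h.symm (by assumption)

lemma swapOn_not_mem {e : Sym2 V} (he : e ∉ es) : swapOn c i j es e = c e := by
  simp [swapOn, he]

lemma D_swap_i (hij : i ≠ j) (x : V) :
    D G (swapOn c i j es) x i + ((G.incidenceFinset x).filter (fun e => e ∈ es ∧ c e = i)).card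
      = D G c x i + ((G.incidenceFinset x).filter (fun e => e ∈ es ∧ c e = j)).card := by
  rw [D_split x i (swapOn c i j es) es, D_split x i c es]
  have h1 : filter (fun e => e ∈ es ∧ swapOn c i j es e = i) (G.incidenceFinset x)
      = filter (fun e => e ∈ es ∧ c e = j) (G.incidenceFinset x) := by
    apply Finset.filter_congr; intro e _
    exact and_congr_right fun he => (swapOn_mem hij he).1
  have h2 : filter (fun e => e ∉ es ∧ swapOn c i j es e = i) (G.incidenceFinset x)
      = filter (fun e => e ∉ es ∧ c e = i) (G.incidenceFinset x) := by
    apply Finset.filter_congr; intro e _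
    exact and_congr_right fun he => by rw [swapOn_not_mem he]
  rw [h1, h2]
  omega

lemma D_swap_j (hij : i ≠ j) (x : V) :
    D G (swapOn c i j es) x j + ((G.incidenceFinset x).filter (fun e => e ∈ es ∧ c e = j)).card
      = D G c x j + ((G.incidenceFinset x).filter (fun e => e ∈ es ∧ c e = i)).card := by
  rw [D_split x j (swapOn c i j es) es, D_split x j c es]
  have h1 : filter (fun e => e ∈ es ∧ swapOn c i j es e = j) (G.incidenceFinset x)
      = filter (fun e => e ∈ es ∧ c e = i) (G.incidenceFinset x) := by
    apply Finset.filter_congr; intro e _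
    exact and_congr_right fun he => (swapOn_mem hij he).2
  have h2 : filter (fun e => e ∉ es ∧ swapOn c i j es e = j) (G.incidenceFinset x)
      = filter (fun e => e ∉ es ∧ c e = j) (G.incidenceFinset x) := by
    apply Finset.filter_congr; intro e _
    exact and_congr_right fun he => by rw [swapOn_not_mem he]
  rw [h1, h2]
  omega


variable (G) in
/-- potential function -/
def Phi (c : Sym2 V → Fin k) : ℕ := ∑ x : V, ∑ a : Fin k, (D G c x a)^2

lemma sum_split (hij : i ≠ j) (f : Fin k → ℕ) :
    ∑ a, f a = f i + f j + ∑ a ∈ Finset.univ \ {i, j}, f a := by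
  rw [← Finset.sum_sdiff (Finset.subset_univ {i, j}), Finset.sum_pair hij]
  ring

lemma improve (c : Sym2 V → Fin k) (v : V) (i j : Fin k)
    (hv3 : D G c v j + 3 ≤ D G c v i) : ∃ c' : Sym2 V → Fin k, Phi G c' < Phi G c := by
  classical
  have hij : i ≠ j := fun h => by rw [h] at hv3; omega
  -- a maximal alternating trail starting at `v`
  have hbound : ∀ n es w, Alt G c i j n v es w → n ≤ G.edgeFinset.card := by
    intro n es w h
    have hlen := h.len
    have hnd := h.nodup
    have hsub := h.sub
    have h1 : es.toFinset.card = n := by rw [List.card_toFinset, hnd.dedup, hlen]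
    have h2 : es.toFinset ⊆ G.edgeFinset := by
      intro e he
      rw [SimpleGraph.mem_edgeFinset]
      exact hsub e (List.mem_toFinset.mp he)
    calc n = es.toFinset.card := h1.symm
      _ ≤ G.edgeFinset.card := Finset.card_le_card h2
  let P : ℕ → Prop := fun n => ∃ es w, Alt G c i j n v es w
  have hP0 : P 0 := ⟨[], v, Alt.nil v⟩
  obtain ⟨es, w, htr⟩ : P (Nat.findGreatest P G.edgeFinset.card) :=
    Nat.findGreatest_spec (Nat.zero_le _) hP0
  set N := Nat.findGreatest P G.edgeFinset.card with hN
  have hmax : ∀ es' w', ¬ Alt G c i j (N + 1) v es' w' := by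
    intro es' w' h'
    have h1 : N + 1 ≤ G.edgeFinset.card := hbound _ _ _ h'
    have h2 : N + 1 ≤ N := Nat.le_findGreatest h1 ⟨es', w', h'⟩
    omega
  have hnd := htr.nodup
  have hsub := htr.sub
  set χ : Fin k := if (N + 1) % 2 = 1 then i else j with hχ
  have hall : ∀ e, e ∈ G.incidenceFinset w → c e = χ → e ∈ es := by
    intro e he hce
    by_contra hne
    have hw' : e ∈ G.incidenceSet w := by simpa using he
    obtain ⟨u, hu⟩ : ∃ u, e = s(w, u) := ⟨Sym2.Mem.other hw'.2, (Sym2.other_spec hw'.2).symm⟩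
    subst hu
    exact hmax _ _ (htr.cons u hw'.1 hne hce)
  have hdiff : ∀ x : V, (cnt c es x i : ℤ) - cnt c es x j =
      (if x = v then 1 else 0) + (if N % 2 = 1 then 1 else -1) * (if x = w then 1 else 0) :=
    htr.cnt_diff hij
  have hle : ∀ x a, cnt c es x a ≤ D G c x a := by
    intro x a
    rw [cnt_eq_card hnd hsub]
    apply Finset.card_le_card
    intro e he
    rw [Finset.mem_filter] at he ⊢
    exact ⟨he.1, he.2.2⟩
  have hmaxw : D G c w χ ≤ cnt c es w χ := by
    rw [cnt_eq_card hnd hsub]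
    apply Finset.card_le_card
    intro e he
    rw [Finset.mem_filter] at he ⊢
    exact ⟨he.1, hall e he.1 he.2, he.2⟩
  -- the bad closed case is impossible
  have hvwN : ¬(w = v ∧ N % 2 = 0) := by
    rintro ⟨rfl, hNe⟩
    have hχi : χ = i := by rw [hχ, if_pos (by omega)]
    rw [hχi] at hmaxw
    have h2 := hdiff w
    simp only [if_pos rfl, if_neg (by omega : ¬ N % 2 = 1)] at h2
    have h4 := hle w j
    omega
  refine ⟨swapOn c i j es, ?_⟩
  -- per-vertex pair inequalities
  have keyIJ : ∀ x : V, x ≠ v →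
      (D G (swapOn c i j es) x i)^2 + (D G (swapOn c i j es) x j)^2
        ≤ (D G c x i)^2 + (D G c x j)^2 := by
    intro x hxv
    have d1 := D_swap_i (G := G) (c := c) (es := es) hij x
    have d2 := D_swap_j (G := G) (c := c) (es := es) hij x
    rw [← cnt_eq_card hnd hsub x i, ← cnt_eq_card hnd hsub x j] at d1 d2
    have d3 := hdiff x
    have d4 := hle x i
    have d5 := hle x j
    by_cases hxw : x = w
    · subst hxw
      rcases Nat.even_or_odd N with hNp | hNp
      · have hN0 : N % 2 = 0 := Nat.even_iff.mp hNp
        have hχi : χ = i := by rw [hχ, if_pos (by omega)]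
        rw [hχi] at hmaxw
        simp only [if_neg hxv, if_neg (by omega : ¬ N % 2 = 1), if_pos rfl] at d3
        norm_num at d3
        have e1 : D G (swapOn c i j es) x i = D G c x i + 1 := by omega
        have e2 : D G (swapOn c i j es) x j + 1 = D G c x j := by omega
        have e3 : D G c x i + 1 ≤ D G c x j := by omega
        nlinarith [e1, e2, e3]
      · have hN1 : N % 2 = 1 := Nat.odd_iff.mp hNp
        have hχj : χ = j := by rw [hχ, if_neg (by omega)]
        rw [hχj] at hmaxw
        simp only [if_neg hxv, if_pos hN1, if_pos rfl] at d3
        norm_num at d3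
        have e1 : D G (swapOn c i j es) x i + 1 = D G c x i := by omega
        have e2 : D G (swapOn c i j es) x j = D G c x j + 1 := by omega
        have e3 : D G c x j + 1 ≤ D G c x i := by omega
        nlinarith [e1, e2, e3]
    · simp only [if_neg hxv, if_neg hxw, mul_zero, add_zero] at d3
      have e1 : D G (swapOn c i j es) x i = D G c x i := by omega
      have e2 : D G (swapOn c i j es) x j = D G c x j := by omega
      rw [e1, e2]
  have strictV :
      (D G (swapOn c i j es) v i)^2 + (D G (swapOn c i j es) v j)^2
        < (D G c v i)^2 + (D G c v j)^2 := by
    have d1 := D_swap_i (G := G) (c := c) (es := es) hij v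
    have d2 := D_swap_j (G := G) (c := c) (es := es) hij v
    rw [← cnt_eq_card hnd hsub v i, ← cnt_eq_card hnd hsub v j] at d1 d2
    have d3 := hdiff v
    have d4 := hle v i
    have d5 := hle v j
    by_cases hwv : w = v
    · have hN1 : N % 2 = 1 := by
        rcases Nat.even_or_odd N with hNp | hNp
        · exact absurd ⟨hwv, Nat.even_iff.mp hNp⟩ hvwN
        · exact Nat.odd_iff.mp hNp
      rw [hwv] at d3
      simp only [if_pos rfl, if_pos hN1] at d3
      norm_num at d3
      have e1 : D G (swapOn c i j es) v i + 2 = D G c v i := by omega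
      have e2 : D G (swapOn c i j es) v j = D G c v j + 2 := by omega
      nlinarith [e1, e2, hv3]
    · have hvw : ¬ v = w := fun h => hwv h.symm
      simp only [if_pos rfl, if_neg hvw, mul_zero, add_zero] at d3
      norm_num at d3
      have e1 : D G (swapOn c i j es) v i + 1 = D G c v i := by omega
      have e2 : D G (swapOn c i j es) v j = D G c v j + 1 := by omega
      nlinarith [e1, e2, hv3]
  -- other colors do not change
  have hoth : ∀ x : V, ∑ a ∈ Finset.univ \ {i, j}, (D G (swapOn c i j es) x a)^2
      = ∑ a ∈ Finset.univ \ {i, j}, (D G c x a)^2 := by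
    intro x
    apply Finset.sum_congr rfl
    intro a ha
    rw [Finset.mem_sdiff, Finset.mem_insert] at ha
    have hai : a ≠ i := fun h => ha.2 (by simp [h])
    have haj : a ≠ j := fun h => ha.2 (by simp [h])
    rw [D_swap_other hij x a hai haj]
  -- assemble
  unfold Phi
  apply Finset.sum_lt_sum
  · intro x _
    rw [sum_split hij, sum_split hij, hoth x]
    by_cases hxv : x = v
    · subst hxv
      have := strictV
      omega
    · have := keyIJ x hxv
      omega
  · refine ⟨v, Finset.mem_univ v, ?_⟩
    rw [sum_split hij, sum_split hij, hoth v]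
    have := strictV
    omega


lemma step (c : Sym2 V → Fin k) :
    (∀ (v : V) (i j : Fin k), |((D G c v i : ℤ)) - D G c v j| ≤ 2) ∨
      ∃ c' : Sym2 V → Fin k, Phi G c' < Phi G c := by
  by_cases h : ∀ (v : V) (i j : Fin k), |((D G c v i : ℤ)) - D G c v j| ≤ 2
  · exact Or.inl h
  · right
    push_neg at h
    obtain ⟨v, i, j, hvij⟩ := h
    have h3 : D G c v j + 3 ≤ D G c v i ∨ D G c v i + 3 ≤ D G c v j := by
      rcases abs_cases ((D G c v i : ℤ) - D G c v j) with ⟨he, _⟩ | ⟨he, _⟩ <;> omega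
    rcases h3 with h3 | h3
    · exact improve c v i j h3
    · exact improve c v j i h3

lemma main : ∀ (M : ℕ) (c : Sym2 V → Fin k), Phi G c ≤ M →
    ∃ c' : Sym2 V → Fin k, ∀ (v : V) (i j : Fin k), |((D G c' v i : ℤ)) - D G c' v j| ≤ 2 := by
  intro M
  induction M with
  | zero =>
    intro c hc
    rcases step (G := G) c with h | ⟨c', hc'⟩
    · exact ⟨c, h⟩
    · omega
  | succ M ih =>
    intro c hc
    rcases step (G := G) c with h | ⟨c', hc'⟩
    · exact ⟨c, h⟩
    · exact ih c' (by omega)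

end NearlyEqAux

/-- Every graph admits an improper `k`-edge-coloring that is nearly equitable:
for every vertex `v` and colors `i ≠ j`, the numbers of `i`- and `j`-colored
edges incident to `v` differ by at most 2. -/
theorem nearly_equitable_edge_coloring
    {V : Type} [Fintype V] [DecidableEq V] (G : SimpleGraph V)
    [DecidableRel G.Adj] (k : ℕ) (hk : 1 ≤ k) :
    ∃ c : Sym2 V → Fin k, ∀ v : V, ∀ i j : Fin k,
      |((((G.incidenceFinset v).filter (fun e => c e = i)).card : ℤ) -
        (((G.incidenceFinset v).filter (fun e => c e = j)).card : ℤ))| ≤ 2 := by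
  obtain ⟨c', hc'⟩ := NearlyEqAux.main (G := G)
    (NearlyEqAux.Phi G (fun _ => (⟨0, hk⟩ : Fin k))) (fun _ => ⟨0, hk⟩) le_rfl
  exact ⟨c', hc'⟩
end

section
/- For every integer k ≥ 1, every finite graph G = (V,E) has a spanning subgraph H = (V,F) such that for every vertex v, |d_H(v) - d_G(v)/k| ≤ 2. -/
/-!
Orient every edge of `G` from its smaller to its larger end and cut the out-edges and the
in-edges at each vertex into chunks of `k` edges, at most one of them shorter. Every edge joins
an out-chunk to an in-chunk, so the chunks form a bipartite multigraph of maximum degree `k`.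
By Hall's theorem on each side and the Mendelsohn–Dulmage theorem, it has a matching covering
every chunk of size exactly `k`. Keeping the matched edges, a vertex with `d⁺` out-edges keeps
between `⌊d⁺/k⌋` and `⌈d⁺/k⌉` of them, and likewise for in-edges, so `|d_H - d_G/k| < 2`.
-/

open scoped Classical

open Finset

variable {ε X Y β α : Type*}

/-- `M` is a matching of the bipartite multigraph in which each edge `e` joins `σ e` to `τ e`. -/
def IsBipartiteMatching (σ : ε → X) (τ : ε → Y) (M : Set ε) : Prop :=
  Set.InjOn σ M ∧ Set.InjOn τ M

theorem IsBipartiteMatching.symm {σ : ε → X} {τ : ε → Y} {M : Set ε}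
    (h : IsBipartiteMatching σ τ M) : IsBipartiteMatching τ σ M :=
  ⟨h.2, h.1⟩

/-- The Mendelsohn–Dulmage theorem. -/
theorem exists_isBipartiteMatching_subset_union {σ : ε → X} {τ : ε → Y} {M₁ M₂ : Set ε}
    (h₁ : IsBipartiteMatching σ τ M₁) (h₂ : IsBipartiteMatching σ τ M₂) :
    ∃ M ⊆ M₁ ∪ M₂, IsBipartiteMatching σ τ M ∧ σ '' M₁ ⊆ σ '' M ∧ τ '' M₂ ⊆ τ '' M := by
  -- Keep the `M₂`-edges of `C` and the `M₁`-edges whose `σ`-end `C` misses. Any fixed point `C`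
  -- of `Ψ` works: a kept `M₁`-edge never shares its `τ`-end with an edge of `C`, and a dropped
  -- `M₂`-edge shares its `τ`-end with a kept `M₁`-edge.
  let Ψ : Set ε →o Set ε :=
    { toFun := fun C => {e ∈ M₂ | ∀ e₁ ∈ M₁, τ e₁ = τ e → σ e₁ ∈ σ '' C}
      monotone' := fun C C' hC e he =>
        ⟨he.1, fun e₁ he₁ h => Set.image_mono hC (he.2 e₁ he₁ h)⟩ }
  set C := Ψ.lfp
  have hC : ∀ e, e ∈ C ↔ e ∈ M₂ ∧ ∀ e₁ ∈ M₁, τ e₁ = τ e → σ e₁ ∈ σ '' C := fun e => by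
    rw [← Set.ext_iff.mp Ψ.map_lfp e]; rfl
  refine ⟨{e ∈ M₁ | σ e ∉ σ '' C} ∪ C, ?_, ⟨?_, ?_⟩, ?_, ?_⟩
  · exact Set.union_subset_union (Set.sep_subset _ _) fun e he => ((hC e).1 he).1
  · rintro e (he | he) e' (he' | he') h
    · exact h₁.1 he.1 he'.1 h
    · exact absurd ⟨e', he', h.symm⟩ he.2
    · exact absurd ⟨e, he, h⟩ he'.2
    · exact h₂.1 ((hC e).1 he).1 ((hC e').1 he').1 h
  · rintro e (he | he) e' (he' | he') h
    · exact h₁.2 he.1 he'.1 h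
    · exact absurd (((hC e').1 he').2 e he.1 h) he.2
    · exact absurd (((hC e).1 he).2 e' he'.1 h.symm) he'.2
    · exact h₂.2 ((hC e).1 he).1 ((hC e').1 he').1 h
  · rintro _ ⟨e, he, rfl⟩
    by_cases hσ : σ e ∈ σ '' C
    · exact Set.image_mono Set.subset_union_right hσ
    · exact ⟨e, Or.inl ⟨he, hσ⟩, rfl⟩
  · rintro _ ⟨e, he, rfl⟩
    by_cases heC : e ∈ C
    · exact ⟨e, Or.inr heC, rfl⟩
    · obtain ⟨e₁, he₁, hτ, hσ⟩ : ∃ e₁ ∈ M₁, τ e₁ = τ e ∧ σ e₁ ∉ σ '' C := by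
        simpa [hC e, he] using heC
      exact ⟨e₁, Or.inl ⟨he₁, hσ⟩, hτ⟩

theorem exists_isBipartiteMatching_left_of_card_fiber_le [DecidableEq X] [DecidableEq Y]
    (E : Finset ε) (σ : ε → X) (τ : ε → Y) {k : ℕ} (hk : 0 < k)
    (hτ : ∀ y, #{e ∈ E | τ e = y} ≤ k) :
    ∃ M ⊆ (E : Set ε), IsBipartiteMatching σ τ M ∧
      ∀ x, k ≤ #{e ∈ E | σ e = x} → x ∈ σ '' M := by
  set A : Finset X := {x ∈ E.image σ | k ≤ #{e ∈ E | σ e = x}}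
  let t : A → Finset Y := fun x => {e ∈ E | σ e = x}.image τ
  -- Hall's condition by double counting the edges at `S`: at least `k * #S` of them, and at
  -- most `k` at each of their `τ`-ends.
  have hall : ∀ s : Finset A, #s ≤ #(s.biUnion t) := by
    intro s
    set S := s.map (Function.Embedding.subtype _)
    set Es := {e ∈ E | σ e ∈ S}
    have hlow : k * #S ≤ #Es := by
      refine mul_card_image_le_card_of_maps_to (fun e he => (mem_filter.1 he).2) k fun x hx => ?_
      obtain ⟨x', -, rfl⟩ := mem_map.1 hx
      refine (mem_filter.1 x'.2).2.trans (card_le_card fun e he => ?_)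
      obtain ⟨heE, hσ⟩ := mem_filter.1 he
      exact mem_filter.2 ⟨mem_filter.2 ⟨heE, hσ ▸ hx⟩, hσ⟩
    have hup : #Es ≤ k * #(s.biUnion t) := by
      refine card_le_mul_card_image_of_maps_to (f := τ) (fun e he => ?_) k
        fun y _ => (card_le_card (filter_subset_filter _ (filter_subset _ _))).trans (hτ y)
      obtain ⟨heE, hσ⟩ := mem_filter.1 he
      obtain ⟨x, hx, hxe⟩ := mem_map.1 hσ
      exact mem_biUnion.2 ⟨x, hx, mem_image.2 ⟨e, mem_filter.2 ⟨heE, hxe.symm⟩, rfl⟩⟩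
    rw [← card_map (Function.Embedding.subtype _)]
    exact Nat.le_of_mul_le_mul_left (hlow.trans hup) hk
  obtain ⟨f, hf, hft⟩ := (all_card_le_biUnion_card_iff_exists_injective t).1 hall
  choose φ hφE hφσ hφτ using
    fun x : A => (by simpa [t, and_assoc] using hft x : ∃ e ∈ E, σ e = x ∧ τ e = f x)
  refine ⟨Set.range φ, Set.range_subset_iff.2 hφE, ⟨?_, ?_⟩, fun x hx => ?_⟩
  · rintro _ ⟨x, rfl⟩ _ ⟨x', rfl⟩ h
    rw [hφσ, hφσ] at h
    rw [Subtype.ext h]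
  · rintro _ ⟨x, rfl⟩ _ ⟨x', rfl⟩ h
    rw [hφτ, hφτ] at h
    rw [hf h]
  · obtain ⟨e, he⟩ := card_pos.1 (hk.trans_le hx)
    have hxA : x ∈ A :=
      mem_filter.2 ⟨mem_image.2 ⟨e, (mem_filter.1 he).1, (mem_filter.1 he).2⟩, hx⟩
    exact ⟨φ ⟨x, hxA⟩, ⟨_, rfl⟩, hφσ _⟩

theorem exists_isBipartiteMatching_of_card_fiber_le [DecidableEq X] [DecidableEq Y]
    (E : Finset ε) (σ : ε → X) (τ : ε → Y) {k : ℕ} (hk : 0 < k)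
    (hσ : ∀ x, #{e ∈ E | σ e = x} ≤ k) (hτ : ∀ y, #{e ∈ E | τ e = y} ≤ k) :
    ∃ M ⊆ (E : Set ε), IsBipartiteMatching σ τ M ∧
      (∀ x, k ≤ #{e ∈ E | σ e = x} → x ∈ σ '' M) ∧ (∀ y, k ≤ #{e ∈ E | τ e = y} → y ∈ τ '' M) := by
  obtain ⟨M₁, hM₁E, hM₁, h₁⟩ := exists_isBipartiteMatching_left_of_card_fiber_le E σ τ hk hτ
  obtain ⟨M₂, hM₂E, hM₂, h₂⟩ := exists_isBipartiteMatching_left_of_card_fiber_le E τ σ hk hσ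
  obtain ⟨M, hM, hMm, hσM, hτM⟩ := exists_isBipartiteMatching_subset_union hM₁ hM₂.symm
  exact ⟨M, hM.trans (Set.union_subset hM₁E hM₂E), hMm, fun x hx => hσM (h₁ x hx),
    fun y hy => hτM (h₂ y hy)⟩

theorem Nat.filter_range_div_eq (n k i : ℕ) (hk : 0 < k) :
    {m ∈ range n | m / k = i} = Ico (i * k) (min n (i * k + k)) := by
  ext m
  simp only [mem_filter, mem_range, mem_Ico, Nat.div_eq_iff hk]
  omega

theorem Finset.exists_chunkIndex (s : Finset α) {k : ℕ} (hk : 0 < k) :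
    ∃ b : α → ℕ, (∀ i, #{a ∈ s | b a = i} ≤ k) ∧ (∀ i < #s / k, #{a ∈ s | b a = i} = k) ∧
      ∀ a ∈ s, k * b a < #s := by
  obtain ⟨φ, hφ⟩ : ∃ φ : α → ℕ, Set.BijOn φ s (range #s) :=
    s.finite_toSet.exists_bijOn_of_encard_eq (by
      rw [Set.encard_coe_eq_coe_finsetCard, Set.encard_coe_eq_coe_finsetCard, card_range])
  have hfiber (i : ℕ) : #{a ∈ s | φ a / k = i} = min #s (i * k + k) - i * k := by
    rw [← Nat.card_Ico, ← Nat.filter_range_div_eq _ _ _ hk]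
    refine card_nbij φ (fun a ha => ?_) (hφ.injOn.mono fun a ha => (mem_filter.1 ha).1)
      fun m hm => ?_
    · simp only [coe_filter, Set.mem_ofPred_eq] at ha ⊢
      exact ⟨mem_coe.1 (hφ.mapsTo ha.1), ha.2⟩
    · simp only [coe_filter, Set.mem_ofPred_eq] at hm
      obtain ⟨a, ha, rfl⟩ := hφ.surjOn hm.1
      exact ⟨a, by simpa using ⟨ha, hm.2⟩, rfl⟩
  refine ⟨fun a => φ a / k, fun i => ?_, fun i hi => ?_, fun a ha => ?_⟩
  · rw [hfiber]
    omega
  · have := (Nat.le_div_iff_mul_le hk).1 hi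
    rw [Nat.succ_mul] at this
    rw [hfiber]
    omega
  · exact (Nat.mul_div_le _ _).trans_lt (by simpa using hφ.mapsTo ha)

theorem Finset.exists_chunkIndex_fiberwise [DecidableEq β] (E : Finset ε) (π : ε → β) {k : ℕ}
    (hk : 0 < k) :
    ∃ ℓ : ε → ℕ, (∀ c, #{e ∈ E | (π e, ℓ e) = c} ≤ k) ∧
      (∀ v, ∀ i < #{e ∈ E | π e = v} / k, #{e ∈ E | (π e, ℓ e) = (v, i)} = k) ∧
      ∀ e ∈ E, k * ℓ e < #{e' ∈ E | π e' = π e} := by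
  choose b hb_le hb_eq hb_lt using fun v => exists_chunkIndex {e ∈ E | π e = v} hk
  have hfiber (v : β) (i : ℕ) :
      {e ∈ E | (π e, b (π e) e) = (v, i)} = {e ∈ {e ∈ E | π e = v} | b v e = i} := by
    ext e
    simp only [mem_filter, Prod.mk.injEq]
    constructor
    · rintro ⟨he, rfl, rfl⟩
      exact ⟨⟨he, rfl⟩, rfl⟩
    · rintro ⟨⟨he, rfl⟩, rfl⟩
      exact ⟨he, rfl, rfl⟩
  refine ⟨fun e => b (π e) e, fun ⟨v, i⟩ => ?_, fun v i hi => ?_, fun e he => ?_⟩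
  · rw [hfiber]
    exact hb_le v i
  · rw [hfiber]
    exact hb_eq v i hi
  · exact hb_lt _ e (mem_filter.2 ⟨he, rfl⟩)

theorem abs_mul_card_sub_card_lt {E F : Finset ε} (ℓ : ε → ℕ) {k : ℕ} (hk : 0 < k)
    (hFE : F ⊆ E) (hinj : Set.InjOn ℓ F) (hlt : ∀ e ∈ E, k * ℓ e < #E)
    (hcov : ∀ i < #E / k, ∃ e ∈ F, ℓ e = i) : |(k * #F : ℤ) - #E| < k := by
  rw [← card_image_of_injOn hinj]
  have hlow : #E / k ≤ #(F.image ℓ) := by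
    simpa using card_le_card (s := range (#E / k)) fun i hi => by
      obtain ⟨e, he, rfl⟩ := hcov i (mem_range.1 hi)
      exact mem_image_of_mem ℓ he
  have hup : #(F.image ℓ) ≤ (#E + k - 1) / k := by
    simpa using card_le_card (t := range ((#E + k - 1) / k)) fun i hi => by
      obtain ⟨e, he, rfl⟩ := mem_image.1 hi
      have := hlt e (hFE he)
      rw [mem_range, ← Nat.add_one_le_iff, Nat.le_div_iff_mul_le hk, add_mul, one_mul, mul_comm]
      omega
  have h₁ := Nat.lt_mul_div_succ #E hk
  have h₂ := Nat.mul_div_le (#E + k - 1) k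
  have h₃ := Nat.mul_le_mul_left k hlow
  have h₄ := Nat.mul_le_mul_left k hup
  rw [Nat.mul_succ] at h₁
  have hlower : #E < k * #(F.image ℓ) + k := by omega
  have hupper : k * #(F.image ℓ) < #E + k := by omega
  exact abs_sub_lt_iff.2 ⟨by omega, by omega⟩

theorem abs_mul_card_filter_sub_card_filter_lt [DecidableEq β] {D : Finset ε} {M : Set ε}
    [DecidablePred (· ∈ M)] (π : ε → β) (ℓ : ε → ℕ) {k : ℕ} (hk : 0 < k) (hMD : M ⊆ D)
    (hinj : Set.InjOn (fun e => (π e, ℓ e)) M)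
    (hlt : ∀ e ∈ D, k * ℓ e < #{e' ∈ D | π e' = π e})
    (hcov : ∀ v, ∀ i < #{e ∈ D | π e = v} / k, (v, i) ∈ (fun e => (π e, ℓ e)) '' M) (v : β) :
    |(k * #{e ∈ D | e ∈ M ∧ π e = v} : ℤ) - #{e ∈ D | π e = v}| < k := by
  refine abs_mul_card_sub_card_lt ℓ hk
    (fun e he => mem_filter.2 ⟨(mem_filter.1 he).1, (mem_filter.1 he).2.2⟩)
    (fun e he e' he' h => hinj (mem_filter.1 he).2.1 (mem_filter.1 he').2.1 ?_)
    (fun e he => ?_) fun i hi => ?_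
  · simp only [coe_filter, Set.mem_ofPred_eq] at he he'
    simp [he.2.2, he'.2.2, h]
  · obtain ⟨heD, rfl⟩ := mem_filter.1 he
    exact hlt e heD
  · obtain ⟨e, heM, he⟩ := hcov v i hi
    simp only [Prod.mk.injEq] at he
    exact ⟨e, mem_filter.2 ⟨hMD heM, heM, he.1⟩, he.2⟩

namespace SimpleGraph

variable {V : Type*} [LinearOrder V]

theorem degree_eq_card_filter_fst_add_card_filter_snd (H : SimpleGraph V) {v : V}
    [inst : Fintype (H.neighborSet v)] (F : Finset (V × V))
    (hF : ∀ e ∈ F, e.1 < e.2) (hH : ∀ a b, H.Adj a b ↔ (a, b) ∈ F ∨ (b, a) ∈ F) :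
    H.degree v = #{e ∈ F | e.1 = v} + #{e ∈ F | e.2 = v} := by
  have hnbr : H.neighborFinset v =
      {e ∈ F | e.1 = v}.image Prod.snd ∪ {e ∈ F | e.2 = v}.image Prod.fst := by
    ext w
    simp only [mem_neighborFinset, hH, mem_union, mem_image, mem_filter]
    constructor
    · rintro (h | h)
      · exact Or.inl ⟨_, ⟨h, rfl⟩, rfl⟩
      · exact Or.inr ⟨_, ⟨h, rfl⟩, rfl⟩
    · rintro (⟨e, ⟨he, rfl⟩, rfl⟩ | ⟨e, ⟨he, rfl⟩, rfl⟩) <;> simp [he]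
  rw [← card_neighborFinset_eq_degree, hnbr, card_union_of_disjoint, card_image_of_injOn,
    card_image_of_injOn]
  · intro e he e' he' h
    simp only [coe_filter, Set.mem_ofPred_eq] at he he'
    exact Prod.ext h (he.2.trans he'.2.symm)
  · intro e he e' he' h
    simp only [coe_filter, Set.mem_ofPred_eq] at he he'
    exact Prod.ext (he.2.trans he'.2.symm) h
  · rw [Finset.disjoint_left]
    rintro w hw hw'
    simp only [mem_image, mem_filter] at hw hw'
    obtain ⟨e, ⟨he, h₁⟩, h₂⟩ := hw
    obtain ⟨e', ⟨he', h₁'⟩, h₂'⟩ := hw'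
    have h := hF e he
    have h' := hF e' he'
    rw [h₁, h₂] at h
    rw [h₁', h₂'] at h'
    exact lt_asymm h h'

theorem exists_le_abs_mul_degree_sub_degree_lt [Fintype V] (G : SimpleGraph V)
    [DecidableRel G.Adj] {k : ℕ} (hk : 0 < k) :
    ∃ H ≤ G, ∀ v, |(k * H.degree v : ℤ) - G.degree v| < 2 * k := by
  set D : Finset (V × V) := {e | G.Adj e.1 e.2 ∧ e.1 < e.2}
  have hD : ∀ e ∈ D, e.1 < e.2 := fun e he => (mem_filter.1 he).2.2
  obtain ⟨ℓ₁, hℓ₁_le, hℓ₁_eq, hℓ₁_lt⟩ := D.exists_chunkIndex_fiberwise Prod.fst hk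
  obtain ⟨ℓ₂, hℓ₂_le, hℓ₂_eq, hℓ₂_lt⟩ := D.exists_chunkIndex_fiberwise Prod.snd hk
  obtain ⟨M, hMD, hM, hcov₁, hcov₂⟩ := exists_isBipartiteMatching_of_card_fiber_le D
    (fun e => (e.1, ℓ₁ e)) (fun e => (e.2, ℓ₂ e)) hk hℓ₁_le hℓ₂_le
  set F : Finset (V × V) := {e ∈ D | e ∈ M}
  have hF : ∀ e ∈ F, e.1 < e.2 := fun e he => hD e (mem_filter.1 he).1
  refine ⟨fromRel fun a b => (a, b) ∈ F, fun a b h => ?_, fun v => ?_⟩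
  · obtain ⟨-, h | h⟩ := fromRel_adj _ a b |>.1 h
    · exact (mem_filter.1 (mem_filter.1 h).1).2.1
    · exact (mem_filter.1 (mem_filter.1 h).1).2.1.symm
  have hout := abs_mul_card_filter_sub_card_filter_lt Prod.fst ℓ₁ hk hMD hM.1 hℓ₁_lt
    (fun v i hi => hcov₁ _ (hℓ₁_eq v i hi).ge) v
  have hin := abs_mul_card_filter_sub_card_filter_lt Prod.snd ℓ₂ hk hMD hM.2 hℓ₂_lt
    (fun v i hi => hcov₂ _ (hℓ₂_eq v i hi).ge) v
  -- `(inst := _)` matches the classical `Fintype` instance of the goal rather than the one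
  -- synthesized for `fromRel`.
  rw [degree_eq_card_filter_fst_add_card_filter_snd (inst := _) _ F hF fun a b => ?_,
    degree_eq_card_filter_fst_add_card_filter_snd G D hD fun a b => ?_]
  · simp only [F, filter_filter]
    rw [abs_sub_lt_iff] at hout hin ⊢
    push_cast
    constructor <;> linarith
  · simp only [D, mem_filter, mem_univ, true_and]
    refine ⟨fun h => ?_, by rintro (⟨h, -⟩ | ⟨h, -⟩) <;> [exact h; exact h.symm]⟩
    rcases lt_or_gt_of_ne (G.ne_of_adj h) with hab | hab
    exacts [Or.inl ⟨h, hab⟩, Or.inr ⟨h.symm, hab⟩]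
  · rw [fromRel_adj]
    exact and_iff_right_of_imp fun h => h.elim (fun h => (hF _ h).ne) fun h => (hF _ h).ne'

end SimpleGraph

theorem spanning_subgraph_fraction_degree_general
    {V : Type} [Fintype V] (G : SimpleGraph V)
    (k : ℕ) (hk : 1 ≤ k) :
    ∃ H : SimpleGraph V, H ≤ G ∧
      ∀ v : V, |((H.degree v : ℚ) - (G.degree v : ℚ) / k)| ≤ 2 := by
  let : LinearOrder V := LinearOrder.lift' _ (Fintype.equivFin V).injective
  obtain ⟨H, hHG, hH⟩ := G.exists_le_abs_mul_degree_sub_degree_lt hk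
  refine ⟨H, hHG, fun v => ?_⟩
  have hk' : (0 : ℚ) < k := by exact_mod_cast hk
  have hv : |(k * H.degree v : ℚ) - G.degree v| < 2 * k := by exact_mod_cast hH v
  rw [show (H.degree v : ℚ) - G.degree v / k = ((k * H.degree v : ℚ) - G.degree v) / k by
    field_simp, abs_div, abs_of_pos hk', div_le_iff₀ hk']
  exact hv.le

/-- For every `k ≥ 1`, every finite graph `G` has a spanning subgraph `H`
such that for every vertex `v`, `|d_H(v) - d_G(v)/k| ≤ 2`. -/
theorem spanning_subgraph_fraction_degree
    {V : Type} [Fintype V] [DecidableEq V] (G : SimpleGraph V)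
    (k : ℕ) (hk : 1 ≤ k) :
    ∃ H : SimpleGraph V, H ≤ G ∧
      ∀ v : V, |((H.degree v : ℚ) - (G.degree v : ℚ) / k)| ≤ 2 :=
  spanning_subgraph_fraction_degree_general G k hk
end

section
/- A finite directed multigraph D with a designated vertex z has k pairwise arc-disjoint out-arborescences rooted at z if and only if for every vertex v there are at least k arc-disjoint directed paths from z to v. -/
/-!
Necessity: an arborescence contains a path from `z` to every vertex, and paths in distinct
arborescences share no arc.

Sufficiency is Lovász's proof. The paths show that at least `k` arcs leave every vertex set
`X ∋ z` that misses some vertex. Grow a first arborescence `T` from `z` one arc at a time,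
keeping two invariants for the unused arcs: every such `X` keeps `k - 1` leaving arcs, and
every such `X` containing the vertex set `U` of `T` keeps `k`. An arc leaving `U` that
preserves them exists because the out-degree of vertex sets is submodular: the tight sets
(`X ∋ z` with only `k - 1` leaving arcs and `X ∪ U` still missing a vertex) are closed under
union, and for a maximal tight set `M` some arc goes from `U \ M` to outside `M ∪ U`; it
leaves no tight set. Once `T` spans, the unused arcs satisfy the cut condition for `k - 1`,
and induction on `k` finishes.
-/

open Relation

section

variable {V A : Type} [Fintype V] [Fintype A] [DecidableEq V] [DecidableEq A]

/-- `S` is a spanning out-arborescence rooted at `z` of the directed multigraph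
with arc type `A` and endpoint maps `src`, `tgt`: the root has in-degree 0,
every other vertex has in-degree 1, and every vertex is reachable from `z`. -/
def IsOutArborescence (src tgt : A → V) (z : V) (S : Finset A) : Prop :=
  ((S.filter (fun a => tgt a = z)).card = 0) ∧
  (∀ v : V, v ≠ z → (S.filter (fun a => tgt a = v)).card = 1) ∧
  (∀ v : V, ReflTransGen (fun x y => ∃ a ∈ S, src a = x ∧ tgt a = y) z v)

/-- `p` is a directed path (a list of arcs) from `z` to `v`. -/
def IsDirPath (src tgt : A → V) (z v : V) (p : List A) : Prop :=
  p.Nodup ∧ p.Chain' (fun a b => tgt a = src b) ∧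
  ((p = [] ∧ z = v) ∨ (p.head?.map src = some z ∧ p.getLast?.map tgt = some v))

end

namespace List

theorem IsChain.exists_nodup_sublist {α : Type*} {R : α → α → Prop} :
    ∀ {p : List α}, p.IsChain R → ∃ q, q <+ p ∧ q.Nodup ∧ q.IsChain R ∧
      q.head? = p.head? ∧ q.getLast? = p.getLast?
  | [], _ => ⟨[], Sublist.slnil, nodup_nil, isChain_nil, rfl, rfl⟩
  | a :: p, hp => by
    have hp' : p.IsChain R := hp.tail
    obtain ⟨q, hqp, hq, hRq, hhead, hlast⟩ := hp'.exists_nodup_sublist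
    by_cases ha : a ∈ q
    · -- `a` recurs in `q`: cut the loop by keeping only the part of `q` from `a` on
      obtain ⟨q₁, q₂, rfl⟩ := append_of_mem ha
      have hsuf : a :: q₂ <+ q₁ ++ a :: q₂ := sublist_append_right _ _
      have hp_ne : p ≠ [] := by
        rintro rfl
        simp at hhead
      refine ⟨a :: q₂, (hsuf.trans hqp).cons a, hq.sublist hsuf, hRq.right_of_append, rfl, ?_⟩
      rw [getLast?_cons_of_ne_nil hp_ne, ← hlast, getLast?_append_of_ne_nil _ (cons_ne_nil _ _)]
    · refine ⟨a :: q, hqp.cons_cons a, nodup_cons.2 ⟨ha, hq⟩, hRq.cons (hhead ▸ hp.rel_head?), rfl,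
        ?_⟩
      rw [getLast?_cons, getLast?_cons, hlast]

end List

section Walks

variable {V A : Type} (src tgt : A → V)

def IsDirWalk (z v : V) (p : List A) : Prop :=
  p.IsChain (fun a b => tgt a = src b) ∧
    ((p = [] ∧ z = v) ∨ (p.head?.map src = some z ∧ p.getLast?.map tgt = some v))

variable {src tgt} {z v : V} {p : List A}

theorem IsDirPath.isDirWalk (hp : IsDirPath src tgt z v p) : IsDirWalk src tgt z v p := hp.2

@[simp]
theorem isDirWalk_nil : IsDirWalk src tgt z v [] ↔ z = v := by
  simp [IsDirWalk]

theorem isDirWalk_cons {a : A} :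
    IsDirWalk src tgt z v (a :: p) ↔ src a = z ∧ IsDirWalk src tgt (tgt a) v p := by
  cases p <;> simp [IsDirWalk, List.isChain_cons_cons, eq_comm, and_assoc, and_left_comm]

theorem exists_isDirWalk_of_reflTransGen {S : Finset A}
    (h : ReflTransGen (fun x y => ∃ a ∈ S, src a = x ∧ tgt a = y) z v) :
    ∃ p, IsDirWalk src tgt z v p ∧ ∀ a ∈ p, a ∈ S := by
  induction h using ReflTransGen.head_induction_on with
  | refl => exact ⟨[], isDirWalk_nil.2 rfl, by simp⟩
  | head hxy _ ih =>
    obtain ⟨a, haS, rfl, rfl⟩ := hxy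
    obtain ⟨p, hp, hpS⟩ := ih
    exact ⟨a :: p, isDirWalk_cons.2 ⟨rfl, hp⟩, by simpa [haS] using hpS⟩

theorem IsDirWalk.exists_isDirPath_sublist (hp : IsDirWalk src tgt z v p) :
    ∃ q, q.Sublist p ∧ IsDirPath src tgt z v q := by
  obtain ⟨q, hqp, hq, hRq, hhead, hlast⟩ := hp.1.exists_nodup_sublist
  refine ⟨q, hqp, hq, hRq, ?_⟩
  rw [← List.head?_eq_none_iff, hhead, List.head?_eq_none_iff, hlast]
  exact hp.2

theorem IsDirWalk.exists_arc_leaving {X : Set V} (hp : IsDirWalk src tgt z v p) (hz : z ∈ X)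
    (hv : v ∉ X) : ∃ a ∈ p, src a ∈ X ∧ tgt a ∉ X := by
  induction p generalizing z with
  | nil => exact absurd (isDirWalk_nil.1 hp ▸ hz) hv
  | cons a p ih =>
    obtain ⟨rfl, hrest⟩ := isDirWalk_cons.1 hp
    by_cases ha : tgt a ∈ X
    · obtain ⟨b, hb, hbX⟩ := ih hrest ha
      exact ⟨b, List.mem_cons_of_mem a hb, hbX⟩
    · exact ⟨a, List.mem_cons_self, hz, ha⟩

end Walks

open Finset

section Cuts

variable {V A : Type} [DecidableEq V] (src tgt : A → V)

def outArcs (F : Finset A) (X : Finset V) : Finset A := {a ∈ F | src a ∈ X ∧ tgt a ∉ X}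

def outDeg (F : Finset A) (X : Finset V) : ℕ := #(outArcs src tgt F X)

def IsArcConnectedFrom (z : V) (k : ℕ) (F : Finset A) : Prop :=
  ∀ X : Finset V, z ∈ X → ∀ v ∉ X, k ≤ outDeg src tgt F X

theorem outDeg_union_add_outDeg_inter_le (F : Finset A) (X Y : Finset V) :
    outDeg src tgt F (X ∪ Y) + outDeg src tgt F (X ∩ Y) ≤
      outDeg src tgt F X + outDeg src tgt F Y := by
  simp only [outDeg, outArcs, card_filter, ← sum_add_distrib]
  refine sum_le_sum fun a _ => ?_
  by_cases src a ∈ X <;> by_cases src a ∈ Y <;> by_cases tgt a ∈ X <;> by_cases tgt a ∈ Y <;>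
    simp [*]

theorem outArcs_erase [DecidableEq A] (F : Finset A) (a : A) (X : Finset V) :
    outArcs src tgt (F.erase a) X = (outArcs src tgt F X).erase a :=
  filter_erase _ _ _

theorem outDeg_le_outDeg_erase_add_one [DecidableEq A] (F : Finset A) (a : A) (X : Finset V) :
    outDeg src tgt F X ≤ outDeg src tgt (F.erase a) X + 1 := by
  have := pred_card_le_card_erase (s := outArcs src tgt F X) (a := a)
  rw [outDeg, outDeg, outArcs_erase]
  omega

variable {src tgt} {z : V} {k : ℕ} {F : Finset A}

theorem outDeg_erase_of_not_leaves [DecidableEq A] {a : A} {X : Finset V}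
    (ha : ¬(src a ∈ X ∧ tgt a ∉ X)) : outDeg src tgt (F.erase a) X = outDeg src tgt F X := by
  rw [outDeg, outArcs_erase, erase_eq_of_notMem (by simp [outArcs, ha]), outDeg]

theorem exists_arc_of_outDeg_lt_outDeg_union {X Y : Finset V}
    (h : outDeg src tgt F X < outDeg src tgt F (X ∪ Y)) :
    ∃ a ∈ F, src a ∈ Y ∧ src a ∉ X ∧ tgt a ∉ X ∪ Y := by
  obtain ⟨a, ha, haX⟩ := exists_mem_notMem_of_card_lt_card h
  simp only [outArcs, mem_filter, mem_union, not_or] at ha haX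
  obtain ⟨haF, hsXY, htX, htY⟩ := ha
  have hsX : src a ∉ X := fun hsX => haX ⟨haF, hsX, htX⟩
  exact ⟨a, haF, hsXY.resolve_left hsX, hsX, by simp [htX, htY]⟩

theorem IsArcConnectedFrom.of_le {j : ℕ} (hF : IsArcConnectedFrom src tgt z k F) (hjk : j ≤ k) :
    IsArcConnectedFrom src tgt z j F :=
  fun X hzX v hv => hjk.trans (hF X hzX v hv)

theorem IsArcConnectedFrom.outDeg_union_le (hF : IsArcConnectedFrom src tgt z k F)
    {X Y : Finset V} {v : V} (hzX : z ∈ X) (hzY : z ∈ Y) (hv : v ∉ X)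
    (hX : outDeg src tgt F X ≤ k) (hY : outDeg src tgt F Y ≤ k) :
    outDeg src tgt F (X ∪ Y) ≤ k := by
  have := outDeg_union_add_outDeg_inter_le src tgt F X Y
  have := hF (X ∩ Y) (mem_inter.2 ⟨hzX, hzY⟩) v fun h => hv (mem_of_mem_inter_left h)
  omega

theorem IsArcConnectedFrom.erase [DecidableEq A] {a : A} (hF : IsArcConnectedFrom src tgt z k F)
    (ha : ∀ X : Finset V, z ∈ X → src a ∈ X → tgt a ∉ X → k + 1 ≤ outDeg src tgt F X) :
    IsArcConnectedFrom src tgt z k (F.erase a) := by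
  intro X hzX v hv
  by_cases hleaves : src a ∈ X ∧ tgt a ∉ X
  · have := ha X hzX hleaves.1 hleaves.2
    have := outDeg_le_outDeg_erase_add_one src tgt F a X
    omega
  · rw [outDeg_erase_of_not_leaves hleaves]
    exact hF X hzX v hv

end Cuts

section Lovasz

variable {V A : Type} [DecidableEq V] [DecidableEq A] [Fintype V] {src tgt : A → V} {z : V}
  {k : ℕ} {F : Finset A}

theorem IsArcConnectedFrom.exists_arc_erase {U : Finset V} {w : V}
    (hF : IsArcConnectedFrom src tgt z k F) (hwU : w ∉ U)
    (hFU : ∀ X, U ⊆ X → ∀ v ∉ X, k + 1 ≤ outDeg src tgt F X) :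
    ∃ a ∈ F, src a ∈ U ∧ tgt a ∉ U ∧ IsArcConnectedFrom src tgt z k (F.erase a) := by
  -- the tight sets: an arc leaving none of them can be deleted
  let D : Finset (Finset V) := {X | z ∈ X ∧ (∃ v, v ∉ X ∪ U) ∧ outDeg src tgt F X ≤ k}
  have mem_D {X} : X ∈ D ↔ z ∈ X ∧ (∃ v, v ∉ X ∪ U) ∧ outDeg src tgt F X ≤ k := by simp [D]
  suffices ∃ a ∈ F, src a ∈ U ∧ tgt a ∉ U ∧ ∀ X ∈ D, src a ∈ X → tgt a ∈ X by
    obtain ⟨a, haF, hsU, htU, hD⟩ := this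
    refine ⟨a, haF, hsU, htU, hF.erase fun X hzX hsX htX => ?_⟩
    by_contra! hlt
    exact htX (hD X (mem_D.2 ⟨hzX, ⟨tgt a, by simp [htX, htU]⟩, by omega⟩) hsX)
  rcases D.eq_empty_or_nonempty with hD | hD
  · have hU := hFU U subset_rfl w hwU
    obtain ⟨a, ha⟩ : (outArcs src tgt F U).Nonempty := card_pos.1 (by rw [outDeg] at hU; omega)
    simp only [outArcs, mem_filter] at ha
    exact ⟨a, ha.1, ha.2.1, ha.2.2, by simp [hD]⟩
  obtain ⟨Xm, hXm⟩ := D.exists_maximal hD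
  obtain ⟨hzXm, ⟨w', hw'⟩, hXmk⟩ := mem_D.1 hXm.prop
  have hXmU := hFU (Xm ∪ U) subset_union_right w' hw'
  obtain ⟨a, haF, hsU, hsXm, htXmU⟩ := exists_arc_of_outDeg_lt_outDeg_union
    (show outDeg src tgt F Xm < outDeg src tgt F (Xm ∪ U) by omega)
  simp only [mem_union, not_or] at htXmU hw'
  refine ⟨a, haF, hsU, htXmU.2, fun X hX hsX => by_contra fun htX => hsXm ?_⟩
  obtain ⟨hzX, -, hXk⟩ := mem_D.1 hX
  have hunion : Xm ∪ X ∈ D := mem_D.2 ⟨mem_union_left _ hzXm, ⟨tgt a, by simp [htXmU, htX]⟩,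
    hF.outDeg_union_le hzXm hzX hw'.1 hXmk hXk⟩
  rw [hXm.eq_of_le hunion subset_union_left]
  exact mem_union_right _ hsX

end Lovasz

section Arborescences

variable {V A : Type} [DecidableEq V] (src tgt : A → V)

structure IsArborescenceOn (z : V) (U : Finset V) (T : Finset A) : Prop where
  root_mem : z ∈ U
  tgt_mem : ∀ a ∈ T, tgt a ∈ U
  tgt_ne_root : ∀ a ∈ T, tgt a ≠ z
  card_in : ∀ v ∈ U, v ≠ z → #{a ∈ T | tgt a = v} = 1
  reachable : ∀ v ∈ U, ReflTransGen (fun x y => ∃ a ∈ T, src a = x ∧ tgt a = y) z v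

variable {src tgt} {z : V} {U : Finset V} {T : Finset A}

theorem isArborescenceOn_singleton_empty (z : V) : IsArborescenceOn src tgt z {z} ∅ where
  root_mem := mem_singleton_self z
  tgt_mem := by simp
  tgt_ne_root := by simp
  card_in := by simp +contextual
  reachable := by simp +contextual [ReflTransGen.refl]

theorem IsArborescenceOn.add_arc [DecidableEq A] (hT : IsArborescenceOn src tgt z U T) {a : A}
    (hsU : src a ∈ U) (htU : tgt a ∉ U) :
    IsArborescenceOn src tgt z (insert (tgt a) U) (insert a T) where
  root_mem := mem_insert_of_mem hT.root_mem
  tgt_mem := (forall_mem_insert _ _ _).2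
    ⟨mem_insert_self _ _, fun b hb => mem_insert_of_mem (hT.tgt_mem b hb)⟩
  tgt_ne_root := (forall_mem_insert _ _ _).2
    ⟨fun (h : tgt a = z) => htU (h ▸ hT.root_mem), hT.tgt_ne_root⟩
  card_in := by
    have hT_tgt : {b ∈ T | tgt b = tgt a} = ∅ :=
      filter_eq_empty_iff.2 fun b hb h => htU (h ▸ hT.tgt_mem b hb)
    intro v hv hvz
    rw [filter_insert]
    rcases mem_insert.1 hv with rfl | hvU
    · simp [hT_tgt]
    · rw [if_neg fun (h : tgt a = v) => htU (h ▸ hvU)]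
      exact hT.card_in v hvU hvz
  reachable := by
    have hmono : ∀ v ∈ U,
        ReflTransGen (fun x y => ∃ b ∈ insert a T, src b = x ∧ tgt b = y) z v := fun v hv =>
      ReflTransGen.mono (fun _ _ ⟨b, hb, hbxy⟩ => ⟨b, mem_insert_of_mem hb, hbxy⟩) _ _
        (hT.reachable v hv)
    rw [forall_mem_insert]
    exact ⟨(hmono _ hsU).tail ⟨a, mem_insert_self a T, rfl, rfl⟩, hmono⟩

theorem IsArborescenceOn.isOutArborescence (hT : IsArborescenceOn src tgt z U T)
    (hU : ∀ v, v ∈ U) : IsOutArborescence src tgt z T :=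
  ⟨card_eq_zero.2 (filter_eq_empty_iff.2 hT.tgt_ne_root), fun v => hT.card_in v (hU v),
    fun v => hT.reachable v (hU v)⟩

end Arborescences

section Packing

variable {V A : Type} [DecidableEq V] [DecidableEq A] [Fintype V] {src tgt : A → V} {z : V}

theorem IsArborescenceOn.exists_isOutArborescence_union {k : ℕ} {F T : Finset A}
    {U : Finset V} (hT : IsArborescenceOn src tgt z U T) (hF : IsArcConnectedFrom src tgt z k F)
    (hFU : ∀ X, U ⊆ X → ∀ v ∉ X, k + 1 ≤ outDeg src tgt F X) :
    ∃ B ⊆ F, IsOutArborescence src tgt z (T ∪ B) ∧ IsArcConnectedFrom src tgt z k (F \ B) := by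
  by_cases hU : ∀ v, v ∈ U
  · exact ⟨∅, empty_subset F, by simpa using hT.isOutArborescence hU, by simpa using hF⟩
  obtain ⟨w, hw⟩ := not_forall.1 hU
  obtain ⟨a, haF, hsU, htU, hFa⟩ := hF.exists_arc_erase hw hFU
  have hFaU : ∀ X, insert (tgt a) U ⊆ X → ∀ v ∉ X, k + 1 ≤ outDeg src tgt (F.erase a) X := by
    intro X hX v hv
    rw [insert_subset_iff] at hX
    rw [outDeg_erase_of_not_leaves fun h => h.2 hX.1]
    exact hFU X hX.2 v hv
  obtain ⟨B, hBF, hTB, hFB⟩ := (hT.add_arc hsU htU).exists_isOutArborescence_union hFa hFaU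
  refine ⟨insert a B, insert_subset haF (hBF.trans (erase_subset a F)), ?_, ?_⟩
  · rwa [union_insert, ← insert_union]
  · rwa [sdiff_insert, ← erase_sdiff_comm]
termination_by #Uᶜ
decreasing_by exact card_lt_card (compl_ssubset_compl.2 (ssubset_insert htU))

theorem IsArcConnectedFrom.exists_disjoint_isOutArborescence :
    ∀ {k : ℕ} {F : Finset A}, IsArcConnectedFrom src tgt z k F →
      ∃ T : Fin k → Finset A, (∀ i, IsOutArborescence src tgt z (T i)) ∧ (∀ i, T i ⊆ F) ∧
        ∀ i j, i ≠ j → Disjoint (T i) (T j)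
  | 0, _, _ => ⟨Fin.elim0, fun i => i.elim0, fun i => i.elim0, fun i => i.elim0⟩
  | k + 1, F, hF => by
    obtain ⟨B, hBF, hB, hFB⟩ := (isArborescenceOn_singleton_empty z).exists_isOutArborescence_union
      (hF.of_le k.le_succ) fun X hX => hF X (singleton_subset_iff.1 hX)
    obtain ⟨T, hT, hTF, hTdisj⟩ := hFB.exists_disjoint_isOutArborescence
    have hBT (i : Fin k) : Disjoint B (T i) := disjoint_sdiff.mono_right (hTF i)
    refine ⟨Fin.cons B T, Fin.cases (by simpa using hB) hT,
      Fin.cases hBF fun i => (hTF i).trans sdiff_subset, ?_⟩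
    intro i j hij
    cases i using Fin.cases <;> cases j using Fin.cases
    · exact absurd rfl hij
    · simpa using hBT _
    · simpa using (hBT _).symm
    · simpa using hTdisj _ _ (ne_of_apply_ne Fin.succ hij)

end Packing

section Paths

variable {V A : Type} [DecidableEq V] {src tgt : A → V} {z : V}

theorem IsOutArborescence.exists_isDirPath {T : Finset A} (hT : IsOutArborescence src tgt z T)
    (v : V) : ∃ p, IsDirPath src tgt z v p ∧ ∀ a ∈ p, a ∈ T := by
  obtain ⟨p, hp, hpT⟩ := exists_isDirWalk_of_reflTransGen (hT.2.2 v)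
  obtain ⟨q, hqp, hq⟩ := hp.exists_isDirPath_sublist
  exact ⟨q, hq, fun a ha => hpT a (hqp.subset ha)⟩

theorem le_outDeg_of_disjoint_walks {k : ℕ} {F : Finset A} {X : Finset V} {v : V}
    (p : Fin k → List A)
    (hp : ∀ i, IsDirWalk src tgt z v (p i)) (hpF : ∀ i, ∀ a ∈ p i, a ∈ F)
    (hdisj : ∀ i j, i ≠ j → ∀ a, a ∈ p i → a ∉ p j) (hz : z ∈ X) (hv : v ∉ X) :
    k ≤ outDeg src tgt F X := by
  choose f hfp hfX using fun i => (hp i).exists_arc_leaving (X := X) hz hv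
  simpa [outDeg] using card_le_card_of_injOn (s := univ) f
    (fun i _ => by simpa [outArcs] using ⟨hpF i _ (hfp i), hfX i⟩)
    (fun i _ j _ hij => by_contra fun hne => hdisj i j hne _ (hfp i) (hij ▸ hfp j))

end Paths

section

variable {V A : Type} [Fintype V] [Fintype A] [DecidableEq V] [DecidableEq A]

/-- Edmonds' branching theorem: a directed multigraph has `k` pairwise
arc-disjoint spanning out-arborescences rooted at `z` iff every vertex is
joined from `z` by `k` arc-disjoint directed paths. -/
theorem edmonds_arborescences (src tgt : A → V) (z : V) (k : ℕ) :
    (∃ T : Fin k → Finset A,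
        (∀ i, IsOutArborescence src tgt z (T i)) ∧
        (∀ i j, i ≠ j → Disjoint (T i) (T j))) ↔
    (∀ v : V, ∃ p : Fin k → List A,
        (∀ i, IsDirPath src tgt z v (p i)) ∧
        (∀ i j, i ≠ j → ∀ a, a ∈ p i → a ∉ p j)) := by
  constructor
  · rintro ⟨T, hT, hdisj⟩ v
    choose p hp hpT using fun i => (hT i).exists_isDirPath v
    exact ⟨p, hp, fun i j hij a hai haj =>
      disjoint_left.1 (hdisj i j hij) (hpT i a hai) (hpT j a haj)⟩
  · intro hpaths
    have hF : IsArcConnectedFrom src tgt z k univ := fun X hz v hv => by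
      obtain ⟨p, hp, hdisj⟩ := hpaths v
      exact le_outDeg_of_disjoint_walks p (fun i => (hp i).isDirWalk) (by simp) hdisj hz hv
    obtain ⟨T, hT, -, hdisj⟩ := hF.exists_disjoint_isOutArborescence
    exact ⟨T, hT, hdisj⟩

end
end

section
/- If G is a graph and (V1, V2) is a maximum cut of G, then the bipartite graph G' consisting of the edges of G across the cut satisfies d_{G'}(v) ≥ d_G(v)/2 for every vertex v; consequently, if G is 2k-edge-connected then G' is k-edge-connected, and if G has minimum degree d then G' has minimum degree at least d/2. -/
open Relation
open scoped Classical

section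

variable {V : Type} [Fintype V] [DecidableEq V]

/-- The size of the cut `(A, Aᶜ)` in `G`: the number of edges with one
endpoint in `A` and the other outside `A`. -/
noncomputable def cutSize (G : SimpleGraph V) (A : Finset V) : ℕ :=
  ∑ u ∈ A, ((G.neighborFinset u).filter (fun w => w ∉ A)).card

/-- The bipartite spanning subgraph of `G` consisting of the edges across the
cut `(A, Aᶜ)`. -/
def crossGraph (G : SimpleGraph V) (A : Finset V) : SimpleGraph V where
  Adj u w := G.Adj u w ∧ ¬((u ∈ A) ↔ (w ∈ A))
  symm := by
    constructor
    intro u w h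
    exact ⟨h.1.symm, fun hc => h.2 (Iff.comm.mp hc)⟩
  loopless := by
    constructor
    intro u h
    exact h.2 Iff.rfl

/-- `G` is `k`-edge-connected: removing any fewer than `k` edges leaves it
connected. -/
def EdgeConn (G : SimpleGraph V) (k : ℕ) : Prop :=
  ∀ F : Finset (Sym2 V), F.card < k →
    ∀ u v : V, ReflTransGen (fun a b => G.Adj a b ∧ s(a, b) ∉ F) u v

/-!
Moving the vertices of `S` to the other side turns the cut `A` into `A ∆ S`, and an edge crosses
`A ∆ S` exactly when it crosses one of `A`, `S` but not both. Hence
`|δ(A)| + |δ(S)| = |δ(A ∆ S)| + 2 |δ(A) ∩ δ(S)|`, and maximality of `A` gives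
`|δ_G(S)| ≤ 2 |δ_{G'}(S)|` for every `S`. For `S = {v}` this is the degree bound; since a graph is
`k`-edge-connected iff every cut separating two vertices has at least `k` edges, it also carries
`2k`-edge-connectivity of `G` over to `k`-edge-connectivity of `G'`.
-/

omit [Fintype V] [DecidableEq V] in
@[simp]
theorem crossGraph_adj {G : SimpleGraph V} {A : Finset V} {u w : V} :
    (crossGraph G A).Adj u w ↔ G.Adj u w ∧ ¬(u ∈ A ↔ w ∈ A) :=
  Iff.rfl

theorem cutSize_eq_card_edgeFinset_crossGraph (G : SimpleGraph V) (A : Finset V) :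
    cutSize G A = (crossGraph G A).edgeFinset.card := by
  rw [cutSize, ← Finset.card_sigma]
  refine Finset.card_nbij (fun p => s(p.1, p.2)) ?_ ?_ ?_
  · rintro ⟨u, w⟩ h
    simp only [Finset.coe_sigma, Set.mem_sigma_iff, Finset.mem_coe, Finset.mem_filter,
      SimpleGraph.mem_neighborFinset] at h
    simp [h]
  · rintro ⟨u, w⟩ h ⟨u', w'⟩ h' he
    simp only [Finset.coe_sigma, Set.mem_sigma_iff, Finset.mem_coe, Finset.mem_filter] at h h'
    rcases Sym2.eq_iff.1 he with ⟨rfl, rfl⟩ | ⟨rfl, rfl⟩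
    · rfl
    · exact absurd h.1 h'.2.2
  · intro e he
    induction e using Sym2.ind with
    | h u w =>
      simp only [Finset.mem_coe, SimpleGraph.mem_edgeFinset, SimpleGraph.mem_edgeSet,
        crossGraph_adj] at he
      by_cases hu : u ∈ A
      · exact ⟨⟨u, w⟩, by simp_all, rfl⟩
      · exact ⟨⟨w, u⟩, by simp_all [he.1.symm], Sym2.eq_swap⟩

theorem cutSize_singleton (G : SimpleGraph V) (v : V) : cutSize G {v} = G.degree v := by
  rw [cutSize, Finset.sum_singleton, ← G.card_neighborFinset_eq_degree]
  congr 1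
  exact Finset.filter_true_of_mem fun w hw =>
    by simpa using (G.ne_of_adj ((G.mem_neighborFinset _ _).1 hw)).symm

theorem edgeFinset_crossGraph_symmDiff (G : SimpleGraph V) (A S : Finset V) :
    (crossGraph G (symmDiff A S)).edgeFinset =
      symmDiff (crossGraph G A).edgeFinset (crossGraph G S).edgeFinset := by
  ext e
  induction e using Sym2.ind with
  | h u w =>
    simp only [Finset.mem_symmDiff, SimpleGraph.mem_edgeFinset, SimpleGraph.mem_edgeSet,
      crossGraph_adj]
    tauto

theorem edgeFinset_crossGraph_crossGraph (G : SimpleGraph V) (A S : Finset V) :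
    (crossGraph (crossGraph G A) S).edgeFinset =
      (crossGraph G A).edgeFinset ∩ (crossGraph G S).edgeFinset := by
  ext e
  induction e using Sym2.ind with
  | h u w =>
    simp only [Finset.mem_inter, SimpleGraph.mem_edgeFinset, SimpleGraph.mem_edgeSet,
      crossGraph_adj]
    tauto

theorem cutSize_add_cutSize (G : SimpleGraph V) (A S : Finset V) :
    cutSize G A + cutSize G S = cutSize G (symmDiff A S) + 2 * cutSize (crossGraph G A) S := by
  simp only [cutSize_eq_card_edgeFinset_crossGraph, edgeFinset_crossGraph_symmDiff,
    edgeFinset_crossGraph_crossGraph]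
  rw [symmDiff_eq_sup_sdiff_inf, Finset.sup_eq_union, Finset.inf_eq_inter]
  set E := (crossGraph G A).edgeFinset
  set F := (crossGraph G S).edgeFinset
  rw [Finset.card_sdiff_of_subset Finset.inter_subset_union,
    ← Finset.card_union_add_card_inter E F]
  have := Finset.card_le_card (Finset.inter_subset_union : E ∩ F ⊆ E ∪ F)
  omega

theorem cutSize_le_two_mul_cutSize_crossGraph (G : SimpleGraph V) (A : Finset V)
    (hmax : ∀ B : Finset V, cutSize G B ≤ cutSize G A) (S : Finset V) :
    cutSize G S ≤ 2 * cutSize (crossGraph G A) S := by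
  have := cutSize_add_cutSize G A S
  have := hmax (symmDiff A S)
  omega

theorem mem_of_reflTransGen_of_edgeFinset_crossGraph_subset (H : SimpleGraph V) {S : Finset V}
    {F : Finset (Sym2 V)} (hF : (crossGraph H S).edgeFinset ⊆ F) {u x : V} (hu : u ∈ S)
    (h : ReflTransGen (fun a b => H.Adj a b ∧ s(a, b) ∉ F) u x) : x ∈ S := by
  induction h with
  | refl => exact hu
  | tail _ hbc ih =>
    by_contra hc
    exact hbc.2 (hF (by simp [hbc.1, ih, hc]))

theorem edgeConn_iff_le_cutSize (H : SimpleGraph V) (k : ℕ) :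
    EdgeConn H k ↔ ∀ (S : Finset V) (u v : V), u ∈ S → v ∉ S → k ≤ cutSize H S := by
  constructor
  · intro hH S u v hu hv
    by_contra! hlt
    rw [cutSize_eq_card_edgeFinset_crossGraph] at hlt
    exact hv (mem_of_reflTransGen_of_edgeFinset_crossGraph_subset H subset_rfl hu (hH _ hlt u v))
  · intro hcut F hF u v
    by_contra huv
    set S := Finset.univ.filter (ReflTransGen (fun a b => H.Adj a b ∧ s(a, b) ∉ F) u)
    have hclosed : ∀ a b, H.Adj a b → s(a, b) ∉ F → a ∈ S → b ∈ S := fun a b hab hnF ha => by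
      simp only [S, Finset.mem_filter, Finset.mem_univ, true_and] at ha ⊢
      exact ha.tail ⟨hab, hnF⟩
    have hS : (crossGraph H S).edgeFinset ⊆ F := by
      intro e he
      induction e using Sym2.ind with
      | h a b =>
        simp only [SimpleGraph.mem_edgeFinset, SimpleGraph.mem_edgeSet, crossGraph_adj] at he
        by_contra hnF
        exact he.2 ⟨hclosed a b he.1 hnF, hclosed b a he.1.symm (by rwa [Sym2.eq_swap])⟩
    have hle := hcut S u v (by simp [S, ReflTransGen.refl]) (by simpa [S] using huv)
    rw [cutSize_eq_card_edgeFinset_crossGraph] at hle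
    have := Finset.card_le_card hS
    omega

/-- If `(A, Aᶜ)` is a maximum cut of `G`, then the cross graph `G'` satisfies
`d_{G'}(v) ≥ d_G(v)/2`; consequently if `G` is `2k`-edge-connected then `G'`
is `k`-edge-connected, and if `G` has minimum degree `d` then `G'` has minimum
degree at least `d/2`. -/
theorem max_cut_half_degrees
    (G : SimpleGraph V) (A : Finset V)
    (hmax : ∀ B : Finset V, cutSize G B ≤ cutSize G A) :
    (∀ v : V, (G.degree v : ℚ) / 2 ≤ ((crossGraph G A).degree v : ℚ)) ∧
    (∀ k : ℕ, EdgeConn G (2 * k) → EdgeConn (crossGraph G A) k) ∧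
    (∀ d : ℕ, (∀ v : V, d ≤ G.degree v) →
      ∀ v : V, (d : ℚ) / 2 ≤ ((crossGraph G A).degree v : ℚ)) := by
  have hcut := cutSize_le_two_mul_cutSize_crossGraph G A hmax
  have hdeg : ∀ v : V, (G.degree v : ℚ) / 2 ≤ ((crossGraph G A).degree v : ℚ) := fun v => by
    have h := hcut {v}
    rw [cutSize_singleton, cutSize_singleton] at h
    rw [div_le_iff₀ two_pos]
    exact_mod_cast (by omega : G.degree v ≤ (crossGraph G A).degree v * 2)
  refine ⟨hdeg, fun k hG => ?_, fun d hd v => le_trans ?_ (hdeg v)⟩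
  · rw [edgeConn_iff_le_cutSize] at hG ⊢
    intro S u v hu hv
    have := hG S u v hu hv
    have := hcut S
    omega
  · gcongr
    exact_mod_cast hd v

end
end
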